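/- Let n ≥ 3 and let K = K(a,b) be a K-generator with positive parameters. If R and S are invertible (n−1)-nonnegative n×n real matrices with R·S = K, then R is a diagonal matrix or S is a diagonal matrix. -/

import Mathlib

open Matrix

/-- A square real matrix is `k`-nonnegative if every minor of order at most `k`
(indexed by strictly increasing row and column selections) is nonnegative. -/
def IsKNonneg {n : ℕ} (k : ℕ) (X : Matrix (Fin n) (Fin n) ℝ) : Prop :=
  ∀ m : ℕ, m ≤ k → ∀ I J : Fin m → Fin n, StrictMono I → StrictMono J →
    0 ≤ (X.submatrix I J).det

/-- The quantity `X = Σ_{k=1}^{n-2} (∏_{ℓ=2}^{k} b_{ℓ-1})(∏_{ℓ=k+1}^{n-2} a_ℓ)`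
(written 0-based: the 1-based `a_j`, `b_j` are `a (j-1)`, `b (j-1)` here). -/
noncomputable def KgenX (n : ℕ) (a b : ℕ → ℝ) : ℝ :=
  ∑ k ∈ Finset.range (n - 2),
    (∏ m ∈ Finset.range k, b m) * ∏ m ∈ Finset.Ico (k + 1) (n - 2), a m

/-- The quantity `Y = b_1 ⋯ b_{n-2}` (0-based: `b 0 ⋯ b (n-3)`). -/
noncomputable def KgenY (n : ℕ) (b : ℕ → ℝ) : ℝ := ∏ m ∈ Finset.range (n - 2), b m

/-- The `K`-generator `K(a, b)` (0-based indexing of the parameters). -/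
noncomputable def Kgen (n : ℕ) (a b : ℕ → ℝ) : Matrix (Fin n) (Fin n) ℝ :=
  fun p q =>
    if (p : ℕ) + 1 = n ∧ (q : ℕ) + 1 = n then b (n - 2) * KgenX n a b
    else if (p : ℕ) + 2 = n ∧ (q : ℕ) + 2 = n then b (n - 3)
    else if (p : ℕ) = (q : ℕ) ∧ (p : ℕ) = 0 then a 0
    else if (p : ℕ) = (q : ℕ) then a p + b ((p : ℕ) - 1)
    else if (p : ℕ) + 2 = n ∧ (q : ℕ) + 1 = n then b (n - 2) * KgenY n b
    else if (q : ℕ) = (p : ℕ) + 1 then a p * b p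
    else if (p : ℕ) = (q : ℕ) + 1 then 1
    else 0

/-!
Since `det K(a,b) = -b_{n-1} Y a_1 ⋯ a_{n-2} < 0`, one factor has negative determinant;
transposing `R S = K` if necessary, it is `S`. Invertible `2`-nonnegative matrices have positive
diagonals, so entrywise nonnegativity forces `R` and `S` to be tridiagonal like `K`. A zero on the
super- or subdiagonal of `S` would make `S` block triangular, with determinant a product of two
nonnegative proper principal minors; hence that band of `S` is positive, and the vanishing of
`K_{i,i+2}` and `K_{i+2,i}` kills every off-diagonal entry of `R` except the corners `R_{n-1,n}`
and `R_{2,1}`. Cutting off the last row and column, the leading principal minor of order `n - 1` of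
`R S` is `det R' det S' + R_{n-1,n} S_{n,n-1} D`, where `R'`, `S'` are the leading principal
submatrices of order `n - 1` and `D` is the leading principal minor of order `n - 2` of `K`. Both
terms are nonnegative; for `K(a,b)` the sum is `0` while `D > 0`, so `R_{n-1,n} = 0`. Reversing the
order of rows and columns gives `R_{2,1} = 0` in the same way from the trailing minors of `K(a,b)`.
-/

open Fin

namespace Matrix

variable {α R : Type*} [CommRing R]

def IsTridiag {n : ℕ} [Zero α] (M : Matrix (Fin n) (Fin n) α) : Prop :=
  ∀ p q : Fin n, (q : ℕ) + 2 ≤ p ∨ (p : ℕ) + 2 ≤ q → M p q = 0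

theorem submatrix_rev_mul {n : ℕ} (A B : Matrix (Fin n) (Fin n) R) :
    (A * B).submatrix rev rev = A.submatrix rev rev * B.submatrix rev rev :=
  (submatrix_mul_equiv A B rev Fin.revPerm rev).symm

theorem det_submatrix_rev {n : ℕ} (A : Matrix (Fin n) (Fin n) R) :
    (A.submatrix rev rev).det = A.det :=
  det_submatrix_equiv_self Fin.revPerm A

theorem submatrix_rev_submatrix_castSucc {n : ℕ} (A : Matrix (Fin (n + 1)) (Fin (n + 1)) α) :
    (A.submatrix rev rev).submatrix castSucc castSucc =
      (A.submatrix succ succ).submatrix rev rev := by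
  ext p q
  simp [Fin.rev_castSucc]

theorem submatrix_rev_submatrix_succ {n : ℕ} (A : Matrix (Fin (n + 1)) (Fin (n + 1)) α) :
    (A.submatrix rev rev).submatrix succ succ =
      (A.submatrix castSucc castSucc).submatrix rev rev := by
  ext p q
  simp [Fin.rev_succ]

theorem submatrix_castSucc_mul {n : ℕ} (A B : Matrix (Fin (n + 1)) (Fin (n + 1)) R) :
    (A * B).submatrix castSucc castSucc =
      A.submatrix castSucc castSucc * B.submatrix castSucc castSucc +
        of fun p q => A p.castSucc (last n) * B (last n) q.castSucc := by
  ext p q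
  simp [mul_apply, Fin.sum_univ_castSucc]

theorem det_add_single_self {ι : Type*} [Fintype ι] [DecidableEq ι] (A : Matrix ι ι R) (i : ι)
    (c : R) : (A + single i i c).det = A.det + c * A.adjugate i i := by
  have : A + single i i c = A.updateRow i (A i + c • Pi.single i 1) := by
    ext p q
    by_cases hp : p = i
    · subst hp
      by_cases hq : q = p <;> simp [hq, Ne.symm]
    · simp [hp, Ne.symm hp]
  rw [this, det_updateRow_add, updateRow_eq_self, det_updateRow_smul, adjugate_apply]

theorem det_add_single_last {n : ℕ} (A : Matrix (Fin (n + 1)) (Fin (n + 1)) R) (c : R) :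
    (A + single (last n) (last n) c).det =
      A.det + c * (A.submatrix castSucc castSucc).det := by
  rw [det_add_single_self, adjugate_fin_succ_eq_det_submatrix, Fin.succAbove_last, ← two_mul,
    pow_mul, neg_one_sq, one_pow, one_mul]

theorem det_eq_zero_of_upper_right_eq_zero {n : ℕ} {M : Matrix (Fin n) (Fin n) R}
    (i : Fin n) (h : ∀ p q, p ≤ i → i ≤ q → M p q = 0) : M.det = 0 := by
  rw [twoBlockTriangular_det' M (· ≤ i) fun p hp q hq => h p q hp (not_le.1 hq).le]
  exact mul_eq_zero_of_left
    (det_eq_zero_of_column_eq_zero ⟨i, le_rfl⟩ fun p : {p // p ≤ i} => h p i p.2 le_rfl) _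

namespace IsTridiag

theorem transpose [Zero α] {n : ℕ} {M : Matrix (Fin n) (Fin n) α} (hM : M.IsTridiag) :
    Mᵀ.IsTridiag :=
  fun p q hpq => hM q p hpq.symm

theorem submatrix_rev [Zero α] {n : ℕ} {M : Matrix (Fin n) (Fin n) α} (hM : M.IsTridiag) :
    (M.submatrix rev rev).IsTridiag := fun p q hpq =>
  hM _ _ (by simp only [Fin.val_rev]; omega)

theorem submatrix_of_val_eq_add [Zero α] {n k j : ℕ} {M : Matrix (Fin n) (Fin n) α}
    (hM : M.IsTridiag) {f : Fin k → Fin n} (hf : ∀ t, (f t : ℕ) = j + t) :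
    (M.submatrix f f).IsTridiag := fun p q hpq =>
  hM _ _ (by simp only [hf]; omega)

theorem det_eq_first {l : ℕ} {M : Matrix (Fin (l + 2)) (Fin (l + 2)) R} (hM : M.IsTridiag) :
    M.det = M 0 0 * (M.submatrix succ succ).det -
      M 0 1 * M 1 0 * ((M.submatrix succ succ).submatrix succ succ).det := by
  rw [det_succ_row_zero, Fin.sum_univ_succ, Fin.sum_univ_succ,
    Finset.sum_eq_zero fun j _ => by rw [hM _ _ (by simp), mul_zero, zero_mul],
    det_succ_column_zero (M.submatrix _ (succ 0).succAbove), Fin.sum_univ_succ,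
    Finset.sum_eq_zero fun j _ => by
      rw [submatrix_apply, Fin.succ_succAbove_zero, hM _ _ (by simp), mul_zero, zero_mul]]
  simp only [Fin.coe_ofNat_eq_mod, Nat.zero_mod, Nat.one_mod, pow_zero, pow_one, Fin.succAbove_zero,
    Fin.succ_zero_eq_one, submatrix_apply, Fin.succAbove_ne_zero_zero one_ne_zero,
    submatrix_submatrix, Function.comp_def, Fin.one_succAbove_succ, add_zero]
  ring

theorem det_eq_last {l : ℕ} {M : Matrix (Fin (l + 2)) (Fin (l + 2)) R} (hM : M.IsTridiag) :
    M.det = M (last _) (last _) * (M.submatrix castSucc castSucc).det -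
      M (last _) (last l).castSucc * M (last l).castSucc (last _) *
        ((M.submatrix castSucc castSucc).submatrix castSucc castSucc).det := by
  have h1 : rev (1 : Fin (l + 2)) = (last l).castSucc := by
    rw [← Fin.succ_zero_eq_one, Fin.rev_succ, Fin.rev_zero]
  rw [← det_submatrix_rev, hM.submatrix_rev.det_eq_first, submatrix_rev_submatrix_succ,
    submatrix_rev_submatrix_succ, det_submatrix_rev, det_submatrix_rev]
  simp [h1]

section Nonneg

variable {n : ℕ} {A B : Matrix (Fin n) (Fin n) ℝ}

theorem mul_apply_eq_zero (hAB : (A * B).IsTridiag) (hA : ∀ p q, 0 ≤ A p q)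
    (hB : ∀ p q, 0 ≤ B p q) {p q : Fin n} (hpq : (q : ℕ) + 2 ≤ p ∨ (p : ℕ) + 2 ≤ q)
    (t : Fin n) :
    A p t * B t q = 0 := by
  have := hAB p q hpq
  rw [mul_apply] at this
  exact (Finset.sum_eq_zero_iff_of_nonneg fun t _ => mul_nonneg (hA p t) (hB t q)).1 this t
    (Finset.mem_univ t)

theorem left_apply_eq_zero (hAB : (A * B).IsTridiag) (hA : ∀ p q, 0 ≤ A p q)
    (hB : ∀ p q, 0 ≤ B p q) {p q w : Fin n} (hpw : (w : ℕ) + 2 ≤ p ∨ (p : ℕ) + 2 ≤ w)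
    (hBqw : 0 < B q w) : A p q = 0 :=
  (mul_eq_zero.1 (hAB.mul_apply_eq_zero hA hB hpw q)).resolve_right hBqw.ne'

theorem of_mul_left (hAB : (A * B).IsTridiag) (hA : ∀ p q, 0 ≤ A p q)
    (hB : ∀ p q, 0 ≤ B p q) (hBd : ∀ i, 0 < B i i) : A.IsTridiag := fun _ q hpq =>
  hAB.left_apply_eq_zero hA hB hpq (hBd q)

theorem of_mul_right (hAB : (A * B).IsTridiag) (hA : ∀ p q, 0 ≤ A p q)
    (hB : ∀ p q, 0 ≤ B p q) (hAd : ∀ i, 0 < A i i) : B.IsTridiag := fun p _ hpq =>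
  (mul_eq_zero.1 (hAB.mul_apply_eq_zero hA hB hpq p)).resolve_left (hAd p).ne'

end Nonneg

end IsTridiag

end Matrix

namespace IsKNonneg

variable {n k : ℕ} {X : Matrix (Fin n) (Fin n) ℝ}

theorem transpose (hX : IsKNonneg k X) : IsKNonneg k Xᵀ := fun m hm I J hI hJ => by
  simpa [← transpose_submatrix, det_transpose] using hX m hm J I hJ hI

theorem apply_nonneg (hX : IsKNonneg k X) (hk : 1 ≤ k) (p q : Fin n) : 0 ≤ X p q := by
  have := hX 1 hk ![p] ![q] (Subsingleton.strictMono _) (Subsingleton.strictMono _)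
  rwa [det_fin_one] at this

theorem mul_le_mul_of_lt (hX : IsKNonneg k X) (hk : 2 ≤ k) {p p' q q' : Fin n} (hp : p < p')
    (hq : q < q') : X p q' * X p' q ≤ X p q * X p' q' := by
  have hmono {i j : Fin n} (hij : i < j) : StrictMono ![i, j] :=
    Fin.strictMono_iff_lt_succ.2 fun t => by fin_cases t; simpa
  have := hX 2 hk _ _ (hmono hp) (hmono hq)
  rw [det_fin_two] at this
  simp only [submatrix_apply] at this
  simpa using this

theorem det_eq_zero_of_apply_self_eq_zero (hX : IsKNonneg k X) (hk : 2 ≤ k) {i p q : Fin n}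
    (hii : X i i = 0) (hq : q < i) (hp : i < p) (hXiq : 0 < X i q) (hXpi : 0 < X p i) :
    X.det = 0 := by
  have h0 := hX.apply_nonneg (by omega)
  have hrow : ∀ q', i < q' → X i q' = 0 := fun q' hq' => by
    have := hX.mul_le_mul_of_lt hk hp hq'
    rw [hii, zero_mul] at this
    nlinarith [h0 i q']
  have hcol : ∀ p', p' < i → X p' i = 0 := fun p' hp' => by
    have := hX.mul_le_mul_of_lt hk hp' hq
    rw [hii, mul_zero] at this
    nlinarith [h0 p' i]
  refine det_eq_zero_of_upper_right_eq_zero i fun p' q' hp' hq' => ?_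
  rcases hp'.lt_or_eq with hp' | rfl
  · rcases hq'.lt_or_eq with hq' | rfl
    · have := hX.mul_le_mul_of_lt hk hp' (hq.trans hq')
      rw [hrow q' hq', mul_zero] at this
      nlinarith [h0 p' q']
    · exact hcol p' hp'
  · rcases hq'.lt_or_eq with hq' | rfl
    · exact hrow q' hq'
    · exact hii

theorem diag_pos (hX : IsKNonneg k X) (hk : 2 ≤ k) (hdet : X.det ≠ 0) (i : Fin n) :
    0 < X i i := by
  have h0 := hX.apply_nonneg (by omega)
  refine (h0 i i).lt_of_ne' fun hii => hdet ?_
  obtain ⟨q, hq⟩ : ∃ q, X i q ≠ 0 := by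
    by_contra! h
    exact hdet (det_eq_zero_of_row_eq_zero i h)
  obtain ⟨p, hp⟩ : ∃ p, X p i ≠ 0 := by
    by_contra! h
    exact hdet (det_eq_zero_of_column_eq_zero i h)
  replace hq := (h0 i q).lt_of_ne' hq
  replace hp := (h0 p i).lt_of_ne' hp
  have hqi : q ≠ i := by rintro rfl; exact hq.ne' hii
  have hpi : p ≠ i := by rintro rfl; exact hp.ne' hii
  rcases hqi.lt_or_gt with hqi | hqi <;> rcases hpi.lt_or_gt with hpi | hpi
  · have := hX.mul_le_mul_of_lt hk hpi hqi
    rw [hii, mul_zero] at this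
    linarith [mul_pos hp hq]
  · exact hX.det_eq_zero_of_apply_self_eq_zero hk hii hqi hpi hq hp
  · rw [← det_transpose]
    exact hX.transpose.det_eq_zero_of_apply_self_eq_zero hk hii hpi hqi hp hq
  · have := hX.mul_le_mul_of_lt hk hpi hqi
    rw [hii, zero_mul] at this
    linarith [mul_pos hp hq]

theorem det_toSquareBlockProp_nonneg (hX : IsKNonneg (n - 1) X) (P : Fin n → Prop)
    [DecidablePred P] {j : Fin n} (hj : ¬P j) : 0 ≤ (toSquareBlockProp X P).det := by
  have hcard := Fintype.card_subtype_lt hj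
  rw [Fintype.card_fin] at hcard
  let e : Fin (Fintype.card {i // P i}) ≃o {i // P i} := monoEquivOfFin _ rfl
  rw [← det_submatrix_equiv_self e.toEquiv]
  exact hX _ (by omega) _ _ ((Subtype.strictMono_coe _).comp e.strictMono)
    ((Subtype.strictMono_coe _).comp e.strictMono)

theorem det_nonneg_of_blockTriangular (hX : IsKNonneg (n - 1) X) (P : Fin n → Prop)
    [DecidablePred P] {i j : Fin n} (hi : P i) (hj : ¬P j)
    (h : ∀ p, P p → ∀ q, ¬P q → X p q = 0) : 0 ≤ X.det := by
  rw [twoBlockTriangular_det' X P h]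
  exact mul_nonneg (hX.det_toSquareBlockProp_nonneg P hj)
    (hX.det_toSquareBlockProp_nonneg _ (not_not.2 hi))

theorem superdiag_pos (hX : IsKNonneg (n - 1) X) (hT : X.IsTridiag) (hdet : X.det < 0)
    {p q : Fin n} (hpq : (q : ℕ) = p + 1) : 0 < X p q := by
  have := q.isLt
  refine (hX.apply_nonneg (by omega) p q).lt_of_ne' fun h0 => hdet.not_ge ?_
  refine hX.det_nonneg_of_blockTriangular (· ≤ p) (le_refl p) (j := q)
    (by simp only [Fin.le_def]; omega) fun i hi j hj => ?_
  simp only [Fin.le_def, not_le] at hi hj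
  by_cases hij : (j : ℕ) = i + 1
  · rwa [(Fin.ext (by omega) : i = p), (Fin.ext (by omega) : j = q)]
  · exact hT _ _ (Or.inr (by omega))

theorem subdiag_pos (hX : IsKNonneg (n - 1) X) (hT : X.IsTridiag) (hdet : X.det < 0)
    {p q : Fin n} (hpq : (q : ℕ) = p + 1) : 0 < X q p :=
  hX.transpose.superdiag_pos hT.transpose (by rwa [det_transpose]) hpq

end IsKNonneg

namespace Matrix

variable {k : ℕ}

variable {R S : Matrix (Fin (k + 2)) (Fin (k + 2)) ℝ}

theorem corner_eq_zero_of_det_init (hR : R.IsTridiag) (hS : S.IsTridiag)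
    (hRc : 0 ≤ R (last k).castSucc (last (k + 1))) (hSc : 0 < S (last (k + 1)) (last k).castSucc)
    (hRi : 0 ≤ (R.submatrix castSucc castSucc).det)
    (hSi : 0 ≤ (S.submatrix castSucc castSucc).det)
    (hK : ((R * S).submatrix castSucc castSucc).det = 0)
    (hK' : 0 < (((R * S).submatrix castSucc castSucc).submatrix castSucc castSucc).det) :
    R (last k).castSucc (last (k + 1)) = 0 := by
  set c := R (last k).castSucc (last (k + 1)) * S (last (k + 1)) (last k).castSucc
  have hsplit : (R * S).submatrix castSucc castSucc =
      R.submatrix castSucc castSucc * S.submatrix castSucc castSucc +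
        single (last k) (last k) c := by
    rw [submatrix_castSucc_mul]
    congr 1
    ext p q
    simp only [of_apply, single_apply]
    by_cases hp : p = last k
    · by_cases hq : q = last k
      · simp [hp, hq, c]
      · rw [if_neg (by tauto), hS _ _ (Or.inl ?_), mul_zero]
        have := Fin.val_lt_last hq
        simp only [val_castSucc, val_last]
        omega
    · rw [if_neg (by tauto), hR _ _ (Or.inr ?_), zero_mul]
      have := Fin.val_lt_last hp
      simp only [val_castSucc, val_last]
      omega
  have hsub : ((R * S).submatrix castSucc castSucc).submatrix castSucc castSucc =
      (R.submatrix castSucc castSucc * S.submatrix castSucc castSucc).submatrix castSucc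
        castSucc := by
    rw [hsplit]
    ext p q
    simp [(castSucc_lt_last p).ne']
  have hc : c * (((R * S).submatrix castSucc castSucc).submatrix castSucc castSucc).det = 0 := by
    have := det_add_single_last (R.submatrix castSucc castSucc * S.submatrix castSucc castSucc) c
    rw [← hsplit, hK, det_mul, ← hsub] at this
    nlinarith [mul_nonneg hRi hSi, mul_nonneg (mul_nonneg hRc hSc.le) hK'.le]
  exact (mul_eq_zero.1 ((mul_eq_zero.1 hc).resolve_right hK'.ne')).resolve_right hSc.ne'

theorem corner_eq_zero_of_det_tail (hR : R.IsTridiag) (hS : S.IsTridiag) (hRc : 0 ≤ R 1 0)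
    (hSc : 0 < S 0 1) (hRt : 0 ≤ (R.submatrix succ succ).det)
    (hSt : 0 ≤ (S.submatrix succ succ).det)
    (hK : ((R * S).submatrix succ succ).det = 0)
    (hK' : 0 < (((R * S).submatrix succ succ).submatrix succ succ).det) : R 1 0 = 0 := by
  have h1 : rev (last k).castSucc = (1 : Fin (k + 2)) := by
    rw [rev_castSucc, rev_last, succ_zero_eq_one]
  have h := corner_eq_zero_of_det_init hR.submatrix_rev hS.submatrix_rev
    (by simpa [h1] using hRc) (by simpa [h1] using hSc)
    (by rwa [submatrix_rev_submatrix_castSucc, det_submatrix_rev])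
    (by rwa [submatrix_rev_submatrix_castSucc, det_submatrix_rev])
    (by rwa [← submatrix_rev_mul, submatrix_rev_submatrix_castSucc, det_submatrix_rev])
    (by rwa [← submatrix_rev_mul, submatrix_rev_submatrix_castSucc,
      submatrix_rev_submatrix_castSucc, det_submatrix_rev])
  simpa [h1] using h

structure IsCornerSingular (K : Matrix (Fin (k + 2)) (Fin (k + 2)) ℝ) : Prop where
  isTridiag : K.IsTridiag
  det_init : (K.submatrix castSucc castSucc).det = 0
  det_init_init_pos : 0 < ((K.submatrix castSucc castSucc).submatrix castSucc castSucc).det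
  det_tail : (K.submatrix succ succ).det = 0
  det_tail_tail_pos : 0 < ((K.submatrix succ succ).submatrix succ succ).det

namespace IsCornerSingular

variable {K : Matrix (Fin (k + 2)) (Fin (k + 2)) ℝ}

theorem transpose (hK : K.IsCornerSingular) : Kᵀ.IsCornerSingular where
  isTridiag := hK.isTridiag.transpose
  det_init := by simpa only [← transpose_submatrix, det_transpose] using hK.det_init
  det_init_init_pos := by
    simpa only [← transpose_submatrix, det_transpose] using hK.det_init_init_pos
  det_tail := by simpa only [← transpose_submatrix, det_transpose] using hK.det_tail
  det_tail_tail_pos := by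
    simpa only [← transpose_submatrix, det_transpose] using hK.det_tail_tail_pos

theorem isDiag_of_det_neg {R S : Matrix (Fin (k + 3)) (Fin (k + 3)) ℝ}
    (hK : (R * S).IsCornerSingular) (hR : IsKNonneg (k + 2) R) (hS : IsKNonneg (k + 2) S)
    (hRdet : R.det ≠ 0) (hSdet : S.det < 0) : R.IsDiag := by
  intro p q hpq
  have hR0 := hR.apply_nonneg (by omega)
  have hS0 := hS.apply_nonneg (by omega)
  have hRt := hK.isTridiag.of_mul_left hR0 hS0 (hS.diag_pos (by omega) hSdet.ne)
  have hSt := hK.isTridiag.of_mul_right hR0 hS0 (hR.diag_pos (by omega) hRdet)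
  have hSsup {i j : Fin (k + 3)} (h : (j : ℕ) = i + 1) : 0 < S i j := hS.superdiag_pos hSt hSdet h
  have hSsub {i j : Fin (k + 3)} (h : (j : ℕ) = i + 1) : 0 < S j i := hS.subdiag_pos hSt hSdet h
  have hupper : R (last (k + 1)).castSucc (last (k + 2)) = 0 :=
    corner_eq_zero_of_det_init hRt hSt (hR0 _ _) (hSsub (by simp))
      (hR _ le_rfl _ _ strictMono_castSucc strictMono_castSucc)
      (hS _ le_rfl _ _ strictMono_castSucc strictMono_castSucc) hK.det_init hK.det_init_init_pos
  have hlower : R 1 0 = 0 :=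
    corner_eq_zero_of_det_tail hRt hSt (hR0 _ _) (hSsup (by simp))
      (hR _ le_rfl _ _ strictMono_succ strictMono_succ)
      (hS _ le_rfl _ _ strictMono_succ strictMono_succ) hK.det_tail hK.det_tail_tail_pos
  obtain h | h | h | h | h : ((q : ℕ) + 2 ≤ p ∨ (p : ℕ) + 2 ≤ q) ∨
      ((q : ℕ) = p + 1 ∧ (q : ℕ) ≤ k + 1) ∨ ((q : ℕ) = p + 1 ∧ (q : ℕ) = k + 2) ∨
      ((p : ℕ) = q + 1 ∧ 1 ≤ (q : ℕ)) ∨ ((p : ℕ) = q + 1 ∧ (q : ℕ) = 0) := by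
    have := Fin.val_ne_of_ne hpq
    have := q.isLt
    omega
  · exact hRt p q h
  · exact hK.isTridiag.left_apply_eq_zero hR0 hS0 (w := ⟨q + 1, by omega⟩)
      (Or.inr (by simp; omega)) (hSsup rfl)
  · rwa [(Fin.ext (by simp; omega) : p = (last (k + 1)).castSucc),
      (Fin.ext (by simp; omega) : q = last (k + 2))]
  · exact hK.isTridiag.left_apply_eq_zero hR0 hS0 (w := ⟨q - 1, by omega⟩)
      (Or.inl (by simp; omega)) (hSsub (by simp; omega))
  · rwa [(Fin.ext (by simp; omega) : p = 1), (Fin.ext (by simp [h.2]) : q = 0)]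

theorem isDiag_or_isDiag {R S : Matrix (Fin (k + 3)) (Fin (k + 3)) ℝ}
    (hK : (R * S).IsCornerSingular) (hdet : (R * S).det < 0) (hR : IsKNonneg (k + 2) R)
    (hS : IsKNonneg (k + 2) S) : R.IsDiag ∨ S.IsDiag := by
  rw [det_mul] at hdet
  rcases lt_or_gt_of_ne (right_ne_zero_of_mul hdet.ne) with hSdet | hSdet
  · exact Or.inl (hK.isDiag_of_det_neg hR hS (left_ne_zero_of_mul hdet.ne) hSdet)
  · have hK' : (Sᵀ * Rᵀ).IsCornerSingular := by
      rw [← transpose_mul]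
      exact hK.transpose
    refine Or.inr (isDiag_transpose_iff.1 (hK'.isDiag_of_det_neg hS.transpose hR.transpose ?_ ?_))
    · rw [det_transpose]
      exact hSdet.ne'
    · rw [det_transpose]
      exact neg_of_mul_neg_left hdet hSdet.le

end IsCornerSingular

end Matrix

section Kgen

variable {m : ℕ} {a b : ℕ → ℝ} {p q : Fin (m + 3)}

theorem Kgen_apply_last_last (hp : (p : ℕ) = m + 2) (hq : (q : ℕ) = m + 2) :
    Kgen (m + 3) a b p q = b (m + 1) * KgenX (m + 3) a b := by
  simp only [Kgen]
  rw [if_pos ⟨by omega, by omega⟩, show m + 3 - 2 = m + 1 by omega]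

theorem Kgen_apply_penult_penult (hp : (p : ℕ) = m + 1) (hq : (q : ℕ) = m + 1) :
    Kgen (m + 3) a b p q = b m := by
  simp only [Kgen]
  rw [if_neg (by omega), if_pos ⟨by omega, by omega⟩, show m + 3 - 3 = m by omega]

theorem Kgen_apply_zero_zero (hp : (p : ℕ) = 0) (hq : (q : ℕ) = 0) :
    Kgen (m + 3) a b p q = a 0 := by
  simp only [Kgen]
  rw [if_neg (by omega), if_neg (by omega), if_pos ⟨by omega, by omega⟩]

theorem Kgen_apply_self (hpq : (p : ℕ) = q) (hp : 1 ≤ (p : ℕ)) (hp' : (p : ℕ) ≤ m) :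
    Kgen (m + 3) a b p q = a p + b (p - 1) := by
  simp only [Kgen]
  rw [if_neg (by omega), if_neg (by omega), if_neg (by omega), if_pos (by omega)]

theorem Kgen_apply_penult_last (hp : (p : ℕ) = m + 1) (hq : (q : ℕ) = m + 2) :
    Kgen (m + 3) a b p q = b (m + 1) * KgenY (m + 3) b := by
  simp only [Kgen]
  rw [if_neg (by omega), if_neg (by omega), if_neg (by omega), if_neg (by omega),
    if_pos ⟨by omega, by omega⟩, show m + 3 - 2 = m + 1 by omega]

theorem Kgen_apply_of_val_eq_succ (hpq : (q : ℕ) = p + 1) (hp : (p : ℕ) ≤ m) :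
    Kgen (m + 3) a b p q = a p * b p := by
  simp only [Kgen]
  rw [if_neg (by omega), if_neg (by omega), if_neg (by omega), if_neg (by omega),
    if_neg (by omega), if_pos (by omega)]

theorem Kgen_apply_of_val_eq_pred (hpq : (p : ℕ) = q + 1) : Kgen (m + 3) a b p q = 1 := by
  simp only [Kgen]
  rw [if_neg (by omega), if_neg (by omega), if_neg (by omega), if_neg (by omega),
    if_neg (by omega), if_neg (by omega), if_pos (by omega)]

theorem isTridiag_Kgen : (Kgen (m + 3) a b).IsTridiag := fun p q h => by
  simp only [Kgen]
  rw [if_neg (by omega), if_neg (by omega), if_neg (by omega), if_neg (by omega),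
    if_neg (by omega), if_neg (by omega), if_neg (by omega)]

theorem det_Kgen_submatrix_leading {k : ℕ} (hk : k ≤ m + 1) {f : Fin k → Fin (m + 3)}
    (hf : ∀ t, (f t : ℕ) = t) :
    ((Kgen (m + 3) a b).submatrix f f).det = ∏ x ∈ Finset.range k, a x := by
  induction k using Nat.strong_induction_on with
  | _ k ih =>
  rcases k with _ | _ | l
  · simp
  · rw [det_fin_one, submatrix_apply, Kgen_apply_zero_zero (by simp [hf]) (by simp [hf])]
    simp
  · have h1 : (f (last (l + 1)) : ℕ) = l + 1 := by simp [hf]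
    have h0 : (f (last l).castSucc : ℕ) = l := by simp [hf]
    rw [(isTridiag_Kgen.submatrix_of_val_eq_add (j := 0) (by simpa using hf)).det_eq_last]
    simp only [submatrix_apply, submatrix_submatrix]
    rw [ih (l + 1) (by omega) (by omega) (by simp [hf]), ih l (by omega) (by omega) (by simp [hf]),
      Kgen_apply_self rfl (by omega) (by omega), Kgen_apply_of_val_eq_pred (by omega),
      Kgen_apply_of_val_eq_succ (by omega) (by omega), h1, h0]
    simp only [Finset.prod_range_succ, add_tsub_cancel_right]
    ring

theorem det_Kgen_submatrix_trailing {k s : ℕ} (hk : 1 ≤ k) (hks : s + k = m + 2)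
    {f : Fin k → Fin (m + 3)} (hf : ∀ t, (f t : ℕ) = s + 1 + t) :
    ((Kgen (m + 3) a b).submatrix f f).det = b (m + 1) * (∏ l ∈ Finset.Ico s (m + 1), b l) *
      ∑ t ∈ Finset.range s,
        (∏ x ∈ Finset.range t, b x) * ∏ x ∈ Finset.Ico (t + 1) (m + 1), a x := by
  induction k using Nat.strong_induction_on generalizing s with
  | _ k ih =>
  rcases k with _ | _ | _ | l
  · omega
  · obtain rfl : s = m + 1 := by omega
    have h0 : (f 0 : ℕ) = m + 2 := by simp [hf]
    rw [det_fin_one, submatrix_apply, Kgen_apply_last_last h0 h0, KgenX,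
      show m + 3 - 2 = m + 1 by omega]
    simp
  · obtain rfl : m = s := by omega
    have h0 : (f 0 : ℕ) = m + 1 := by simp [hf]
    have h1 : (f 1 : ℕ) = m + 2 := by simp [hf]
    rw [det_fin_two]
    simp only [submatrix_apply]
    rw [Kgen_apply_penult_penult h0 h0, Kgen_apply_penult_last h0 h1,
      Kgen_apply_of_val_eq_pred (p := f 1) (q := f 0) (by omega), Kgen_apply_last_last h1 h1,
      KgenX, KgenY, show m + 3 - 2 = m + 1 by omega]
    simp only [Finset.sum_range_succ, Finset.prod_range_succ, Finset.Ico_self, Finset.prod_empty,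
      Nat.Ico_succ_singleton, Finset.prod_singleton]
    ring
  · have h0 : (f 0 : ℕ) = s + 1 := by simp [hf]
    have h1 : (f 1 : ℕ) = s + 2 := by simp [hf]
    rw [(isTridiag_Kgen.submatrix_of_val_eq_add hf).det_eq_first]
    simp only [submatrix_apply, submatrix_submatrix]
    rw [ih (l + 2) (by omega) (s := s + 1) (by omega) (by omega) (by simp [hf]; omega),
      ih (l + 1) (by omega) (s := s + 2) (by omega) (by omega) (by simp [hf]; omega),
      Kgen_apply_self rfl (by omega) (by omega), Kgen_apply_of_val_eq_succ (by omega) (by omega),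
      Kgen_apply_of_val_eq_pred (by omega), h0, add_tsub_cancel_right,
      Finset.prod_eq_prod_Ico_succ_bot (by omega : s < m + 1) b,
      Finset.prod_eq_prod_Ico_succ_bot (by omega : s + 1 < m + 1) b]
    simp only [Finset.sum_range_succ, Finset.prod_range_succ]
    rw [Finset.prod_eq_prod_Ico_succ_bot (by omega : s + 1 < m + 1) a]
    ring

theorem det_Kgen_submatrix_castSucc :
    ((Kgen (m + 3) a b).submatrix castSucc castSucc).det = 0 := by
  have h1 : ((last (m + 1)).castSucc : ℕ) = m + 1 := by simp
  have h0 : ((last m).castSucc.castSucc : ℕ) = m := by simp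
  rw [(isTridiag_Kgen.submatrix_of_val_eq_add (j := 0) (by simp)).det_eq_last]
  simp only [submatrix_apply, submatrix_submatrix]
  rw [det_Kgen_submatrix_leading le_rfl (by simp), det_Kgen_submatrix_leading (by omega) (by simp),
    Kgen_apply_penult_penult h1 h1, Kgen_apply_of_val_eq_pred (by omega),
    Kgen_apply_of_val_eq_succ (by omega) (by omega), h0, Finset.prod_range_succ]
  ring

theorem det_Kgen :
    (Kgen (m + 3) a b).det =
      -(b (m + 1) * KgenY (m + 3) b * ∏ x ∈ Finset.range (m + 1), a x) := by
  have h2 : (last (m + 2) : ℕ) = m + 2 := by simp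
  have h1 : ((last (m + 1)).castSucc : ℕ) = m + 1 := by simp
  rw [isTridiag_Kgen.det_eq_last, det_Kgen_submatrix_castSucc, submatrix_submatrix,
    det_Kgen_submatrix_leading le_rfl (by simp), Kgen_apply_last_last h2 h2,
    Kgen_apply_of_val_eq_pred (by rw [h1, h2]), Kgen_apply_penult_last h1 h2]
  ring

theorem isCornerSingular_Kgen (ha : ∀ i < m + 1, 0 < a i) (hb : ∀ i < m + 2, 0 < b i) :
    (Kgen (m + 3) a b).IsCornerSingular where
  isTridiag := isTridiag_Kgen
  det_init := det_Kgen_submatrix_castSucc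
  det_init_init_pos := by
    rw [submatrix_submatrix, det_Kgen_submatrix_leading le_rfl (by simp)]
    exact Finset.prod_pos fun i hi => ha i (Finset.mem_range.1 hi)
  det_tail := by
    rw [det_Kgen_submatrix_trailing (s := 0) (by omega) (by omega) (by simp [add_comm])]
    simp
  det_tail_tail_pos := by
    rw [submatrix_submatrix,
      det_Kgen_submatrix_trailing (s := 1) (by omega) (by omega) (by simp; omega)]
    simp only [Finset.sum_range_one, Finset.prod_range_zero, one_mul]
    have hb' := hb (m + 1) (by omega)
    have hbI := Finset.prod_pos fun i (hi : i ∈ Finset.Ico 1 (m + 1)) =>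
      hb i (by simp at hi; omega)
    have haI := Finset.prod_pos fun i (hi : i ∈ Finset.Ico 1 (m + 1)) =>
      ha i (by simp at hi; omega)
    positivity

theorem det_Kgen_neg (ha : ∀ i < m + 1, 0 < a i) (hb : ∀ i < m + 2, 0 < b i) :
    (Kgen (m + 3) a b).det < 0 := by
  have hY : 0 < KgenY (m + 3) b := Finset.prod_pos fun i hi => hb i (by simp at hi; omega)
  have hA : 0 < ∏ x ∈ Finset.range (m + 1), a x :=
    Finset.prod_pos fun i hi => ha i (Finset.mem_range.1 hi)
  rw [det_Kgen, neg_lt_zero]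
  exact mul_pos (mul_pos (hb (m + 1) (by omega)) hY) hA

end Kgen

theorem Kgen_minimality_general (n : ℕ) (hn : 3 ≤ n) (a b : ℕ → ℝ)
    (ha : ∀ i, i < n - 2 → 0 < a i) (hb : ∀ i, i < n - 1 → 0 < b i)
    (R S : Matrix (Fin n) (Fin n) ℝ)
    (hRk : IsKNonneg (n - 1) R) (hSk : IsKNonneg (n - 1) S)
    (h : R * S = Kgen n a b) :
    (∀ p q : Fin n, p ≠ q → R p q = 0) ∨ (∀ p q : Fin n, p ≠ q → S p q = 0) := by
  obtain ⟨m, rfl⟩ : ∃ m, n = m + 3 := ⟨n - 3, by omega⟩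
  exact (h ▸ isCornerSingular_Kgen ha hb).isDiag_or_isDiag (h ▸ det_Kgen_neg ha hb) hRk hSk

/-- Minimality of the `K`-generators: in any factorization `R * S = K(a,b)` within
the semigroup of invertible `(n-1)`-nonnegative matrices, one of the two factors
is a diagonal matrix. -/
theorem Kgen_minimality (n : ℕ) (hn : 3 ≤ n) (a b : ℕ → ℝ)
    (ha : ∀ i, i < n - 2 → 0 < a i) (hb : ∀ i, i < n - 1 → 0 < b i)
    (R S : Matrix (Fin n) (Fin n) ℝ) (hR : IsUnit R) (hS : IsUnit S)
    (hRk : IsKNonneg (n - 1) R) (hSk : IsKNonneg (n - 1) S)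
    (h : R * S = Kgen n a b) :
    (∀ p q : Fin n, p ≠ q → R p q = 0) ∨ (∀ p q : Fin n, p ≠ q → S p q = 0) :=
  Kgen_minimality_general n hn a b ha hb R S hRk hSk h
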